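/- arXiv:2505.00247 — 2 statements merged into one kernel-verified Lean document; each statement's English description precedes it below -/
import Mathlib

section
/- Let (P,θ) be a Cartan geometry with underlying data (G,V), and Θ the induced multiplicative one-form on the gauge groupoid 𝒢_P = (P×P)/G. Then ker(Θ) ⊆ T𝒢_P is a distribution complementary to both the source fibers T^s𝒢_P = ker(ds) and the target fibers T^t𝒢_P = ker(dt): T_g𝒢_P = ker(Θ)_g ⊕ T^s_g𝒢_P = ker(Θ)_g ⊕ T^t_g𝒢_P for every g ∈ 𝒢_P. -/
/-!
STATEMENT 13: Let `(P,θ)` be a Cartan geometry with underlying data `(G,V)`, and `Θ`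
the induced multiplicative one-form on the gauge groupoid `𝒢_P = (P×P)/G`.  Then
`ker(Θ) ⊆ T𝒢_P` is a distribution complementary to both the source fibers
`T^s𝒢_P = ker(ds)` and the target fibers `T^t𝒢_P = ker(dt)`:
`T_g𝒢_P = ker(Θ)_g ⊕ T^s_g𝒢_P = ker(Θ)_g ⊕ T^t_g𝒢_P` for every `g ∈ 𝒢_P`.

The tangent space to `𝒢_P` at `[p:q]` is presented on representatives as
`(W × W)/Δ`, where `W` trivializes `TP` and
`Δ = {(a(α)_p, a(α)_q) : α ∈ 𝔤}` is the space of directions of the diagonal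
`G`-orbit.  Upstairs, `ker Θ` corresponds to `{(u,w) : θ_p(u) = θ_q(w)}`, the
source (resp. target) fibers correspond to `{(u,w) : w vertical}` (resp.
`{(u,w) : u vertical}`), where `vertical = ker dπ = a(𝔤)`.  Complementarity
downstairs means: intersection `= Δ` and sum `= ⊤` upstairs.
-/

theorem kernel_of_multiplicative_cartan_form_is_complementary
    (P W V 𝔤 : Type)
    [AddCommGroup W] [Module ℝ W] [AddCommGroup V] [Module ℝ V]
    [AddCommGroup 𝔤] [Module ℝ 𝔤]
    -- the Cartan connection: a pointwise isomorphism θ_p : T_pP ≅ V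
    (θ : P → (W ≃ₗ[ℝ] V))
    -- 𝔤 as a subspace of V, and the (pointwise linear) fundamental vector fields
    (ι : 𝔤 →ₗ[ℝ] V) (hιinj : Function.Injective ι)
    (aL : P → 𝔤 →ₗ[ℝ] W)
    -- θ reproduces fundamental vector fields
    (hfund : ∀ (p : P) (α : 𝔤), θ p (aL p α) = ι α)
    (p q : P) :
    -- Θ at [p:q] on representatives: (u,w) ↦ θ_p(u) − θ_q(w)
    let Θpq : (W × W) →ₗ[ℝ] V :=
      ((θ p).toLinearMap.comp (LinearMap.fst ℝ W W))
        - ((θ q).toLinearMap.comp (LinearMap.snd ℝ W W))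
    -- the diagonal orbit directions (the kernel of the tangent quotient map)
    let Δ : Submodule ℝ (W × W) := LinearMap.range ((aL p).prod (aL q))
    -- the preimage of T^s𝒢_P: second component vertical
    let Ks : Submodule ℝ (W × W) :=
      Submodule.comap ((θ q).toLinearMap.comp (LinearMap.snd ℝ W W))
        (LinearMap.range ι)
    -- the preimage of T^t𝒢_P: first component vertical
    let Kt : Submodule ℝ (W × W) :=
      Submodule.comap ((θ p).toLinearMap.comp (LinearMap.fst ℝ W W))
        (LinearMap.range ι)
    -- complementarity T = ker Θ ⊕ T^s = ker Θ ⊕ T^t (downstairs: Δ is the zero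
    -- of the tangent space at [p:q])
    (LinearMap.ker Θpq ⊓ Ks = Δ) ∧ (LinearMap.ker Θpq ⊔ Ks = ⊤) ∧
    (LinearMap.ker Θpq ⊓ Kt = Δ) ∧ (LinearMap.ker Θpq ⊔ Kt = ⊤) := by
  intro Θpq Δ Ks Kt
  have hmem : ∀ x : W × W, x ∈ LinearMap.ker Θpq ↔ θ p x.1 = θ q x.2 := by
    intro x
    simp [Θpq, LinearMap.mem_ker, sub_eq_zero]
  have hKs : ∀ x : W × W, x ∈ Ks ↔ ∃ α, ι α = θ q x.2 := by
    intro x; simp [Ks]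
  have hKt : ∀ x : W × W, x ∈ Kt ↔ ∃ α, ι α = θ p x.1 := by
    intro x; simp [Kt]
  have hΔ : ∀ x : W × W, x ∈ Δ ↔ ∃ α, aL p α = x.1 ∧ aL q α = x.2 := by
    intro x; simp [Δ, LinearMap.mem_range, Prod.ext_iff]
  have hinf : ∀ (K : Submodule ℝ (W × W)),
      (∀ x : W × W, x ∈ K → (∃ α, ι α = θ q x.2) ∨ (∃ α, ι α = θ p x.1)) →
      (Δ ≤ K) → LinearMap.ker Θpq ⊓ K = Δ := by
    intro K hK hΔK
    apply le_antisymm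
    · intro x hx
      obtain ⟨hx1, hx2⟩ := Submodule.mem_inf.1 hx
      rw [hmem] at hx1
      rw [hΔ]
      rcases hK x hx2 with ⟨α, hα⟩ | ⟨α, hα⟩
      · exact ⟨α, (θ p).injective (by rw [hfund, hα, hx1]),
          (θ q).injective (by rw [hfund, hα])⟩
      · exact ⟨α, (θ p).injective (by rw [hfund, hα]),
          (θ q).injective (by rw [hfund, hα, ← hx1])⟩
    · intro x hx
      refine Submodule.mem_inf.2 ⟨?_, hΔK hx⟩
      rcases (hΔ x).1 hx with ⟨α, h1, h2⟩
      rw [hmem, ← h1, ← h2, hfund, hfund]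
  have hΔKs : Δ ≤ Ks := by
    intro x hx
    rcases (hΔ x).1 hx with ⟨α, _, h2⟩
    exact (hKs x).2 ⟨α, by rw [← h2, hfund]⟩
  have hΔKt : Δ ≤ Kt := by
    intro x hx
    rcases (hΔ x).1 hx with ⟨α, h1, _⟩
    exact (hKt x).2 ⟨α, by rw [← h1, hfund]⟩
  have hsupKs : LinearMap.ker Θpq ⊔ Ks = ⊤ := by
    rw [eq_top_iff]
    rintro ⟨u, w⟩ -
    have : (u, w) = ((θ p).symm (θ q w), w) + (u - (θ p).symm (θ q w), 0) := by
      ext <;> simp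
    rw [this]
    refine Submodule.add_mem _ (Submodule.mem_sup_left ?_) (Submodule.mem_sup_right ?_)
    · rw [hmem]; simp
    · exact (hKs _).2 ⟨0, by simp⟩
  have hsupKt : LinearMap.ker Θpq ⊔ Kt = ⊤ := by
    rw [eq_top_iff]
    rintro ⟨u, w⟩ -
    have : (u, w) = (u, (θ q).symm (θ p u)) + (0, w - (θ q).symm (θ p u)) := by
      ext <;> simp
    rw [this]
    refine Submodule.add_mem _ (Submodule.mem_sup_left ?_) (Submodule.mem_sup_right ?_)
    · rw [hmem]; simp
    · exact (hKt _).2 ⟨0, by simp⟩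
  exact ⟨hinf Ks (fun x hx => Or.inl ((hKs x).1 hx)) hΔKs, hsupKs,
    hinf Kt (fun x hx => Or.inr ((hKt x).1 hx)) hΔKt, hsupKt⟩
end

section
/- Let (Q,ω) be a Cartan geometry over M and (P,θ) a Cartan geometry over B, both with underlying data (G,V). The V-valued one-form pr_Q^*ω − pr_P^*θ on Q × P vanishes on tangent vectors to the orbits of the diagonal G-action and is G-equivariant, hence descends to a one-form Θ on 𝒫_Q = (Q × P)/G with values in the pullback of the associated bundle Q[V]. -/
/-!
STATEMENT 15: Let `(Q,ω)` be a Cartan geometry over `M` and `(P,θ)` a Cartan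
geometry over `B`, both with underlying data `(G,V)`.  The `V`-valued one-form
`pr_Q^*ω − pr_P^*θ` on `Q × P` vanishes on tangent vectors to the orbits of the
diagonal `G`-action and is `G`-equivariant, hence descends to a one-form `Θ` on
`𝒫_Q = (Q × P)/G` with values in the pullback of the associated bundle
`Q[V] = (Q × V)/G`.

The tangent bundles of `Q` and `P` are trivialized by `WQ` and `WP`; `dLQ`, `dLP`
are the differentials of the `G`-actions and `aQ`, `aP` the fundamental vector
fields.  A tangent vector to `𝒫_Q` at `[(q,p)]` is the class of `((q,p),(u,w))`
modulo the diagonal action; a value of the pullback of `Q[V]` at `[(q,p)]` is a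
class `[(q,v)] ∈ Q[V]`.
-/

theorem difference_form_descends_to_principal_groupoid_bundle
    (G Q P V : Type) [Group G] [MulAction G Q] [MulAction G P]
    [AddCommGroup V] [Module ℝ V]
    (𝔤 : Type) [LieRing 𝔤] [LieAlgebra ℝ 𝔤]
    (WQ WP : Type) [AddCommGroup WQ] [Module ℝ WQ] [AddCommGroup WP] [Module ℝ WP]
    (ρG : G →* (V ≃ₗ[ℝ] V)) (ι : 𝔤 →ₗ[ℝ] V)
    -- the Cartan connection ω on Q
    (ω : Q → (WQ ≃ₗ[ℝ] V))
    (dLQ : G → Q → (WQ ≃ₗ[ℝ] WQ)) (aQ : 𝔤 → Q → WQ)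
    (hωfund : ∀ (α : 𝔤) (q : Q), ω q (aQ α q) = ι α)
    (hωequiv : ∀ (g : G) (q : Q) (u : WQ),
      ω (g • q) (dLQ g q u) = ρG g (ω q u))
    -- the Cartan connection θ on P
    (θ : P → (WP ≃ₗ[ℝ] V))
    (dLP : G → P → (WP ≃ₗ[ℝ] WP)) (aP : 𝔤 → P → WP)
    (hθfund : ∀ (α : 𝔤) (p : P), θ p (aP α p) = ι α)
    (hθequiv : ∀ (g : G) (p : P) (w : WP),
      θ (g • p) (dLP g p w) = ρG g (θ p w)) :
    -- the form σ = pr_Q^*ω − pr_P^*θ: σ_{(q,p)}(u,w) = ω q u − θ p w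
    -- (i) σ vanishes on tangent vectors to the orbits of the diagonal G-action
    (∀ (α : 𝔤) (q : Q) (p : P), ω q (aQ α q) - θ p (aP α p) = 0) ∧
    -- (ii) σ is G-equivariant
    (∀ (g : G) (q : Q) (p : P) (u : WQ) (w : WP),
      ω (g • q) (dLQ g q u) - θ (g • p) (dLP g p w)
        = ρG g (ω q u - θ p w)) ∧
    -- (iii) hence σ descends to a one-form Θ on 𝒫_Q = (Q × P)/G with values in
    -- the pullback of Q[V] = (Q × V)/G
    (∃ Θ : Quot (fun (x y : (Q × P) × (WQ × WP)) => ∃ g : G,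
          ((g • x.1.1, g • x.1.2),
            (dLQ g x.1.1 x.2.1, dLP g x.1.2 x.2.2)) = y)
        → Quot (fun (x y : Q × V) => ∃ g : G, (g • x.1, ρG g x.2) = y),
      ∀ (q : Q) (p : P) (u : WQ) (w : WP),
        Θ (Quot.mk _ ((q, p), (u, w)))
          = Quot.mk _ (q, ω q u - θ p w)) := by
  refine ⟨fun α q p => by rw [hωfund, hθfund, sub_self],
    fun g q p u w => by rw [hωequiv, hθequiv, map_sub], ?_⟩
  refine ⟨Quot.lift (fun x => Quot.mk _ (x.1.1, ω x.1.1 x.2.1 - θ x.1.2 x.2.2)) ?_,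
    fun q p u w => rfl⟩
  rintro ⟨⟨q, p⟩, ⟨u, w⟩⟩ y ⟨g, rfl⟩
  exact Quot.sound ⟨g, by simp [hωequiv, hθequiv, map_sub]⟩
end
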